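/- Let n ≥ 2 be an integer, A an LM_n-algebra, and (X(A),{f_1^A,…,f_{n−1}^A}) its dual l_nP-space of prime filters. Then: (i) the lattice of all closed modal subsets of X(A) is isomorphic to the dual of the lattice of all LM_n-congruences on A, via the map Y ↦ Θ_M(Y) = {(a,b) ∈ A×A : σ_A(a) ∩ Y = σ_A(b) ∩ Y}; (ii) the lattice of all open modal subsets of X(A) is isomorphic to the lattice of all LM_n-congruences on A, via the map G ↦ Θ_OM(G) = {(a,b) ∈ A×A : σ_A(a) △ σ_A(b) ⊆ G}. -/

import Mathlib

/-- An LM_θ-algebra over a linearly ordered index set `I`: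
a bounded distributive lattice with operations `phi i` and `phibar i`. -/
structure LMAlg (I A : Type*) [LinearOrder I] [DistribLattice A] [BoundedOrder A] where
  phi : I → A → A
  phibar : I → A → A
  phi_sup : ∀ i x y, phi i (x ⊔ y) = phi i x ⊔ phi i y
  phi_inf : ∀ i x y, phi i (x ⊓ y) = phi i x ⊓ phi i y
  phi_bot : ∀ i, phi i ⊥ = ⊥
  phi_top : ∀ i, phi i ⊤ = ⊤
  sup_phibar : ∀ i x, phi i x ⊔ phibar i x = ⊤
  inf_phibar : ∀ i x, phi i x ⊓ phibar i x = ⊥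
  phi_phi : ∀ i j x, phi i (phi j x) = phi j x
  phi_mono : ∀ ⦃i j : I⦄, i ≤ j → ∀ x, phi i x ≤ phi j x
  determined : ∀ x y, (∀ i, phi i x = phi i y) → x = y

/-- A prime filter of a bounded distributive lattice. -/
structure PrimeFilter (A : Type*) [DistribLattice A] [BoundedOrder A] where
  carrier : Set A
  top_mem : ⊤ ∈ carrier
  bot_notMem : ⊥ ∉ carrier
  mem_of_le : ∀ {a b : A}, a ∈ carrier → a ≤ b → b ∈ carrier
  inf_mem : ∀ {a b : A}, a ∈ carrier → b ∈ carrier → a ⊓ b ∈ carrier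
  prime : ∀ {a b : A}, a ⊔ b ∈ carrier → a ∈ carrier ∨ b ∈ carrier

variable {I A : Type*} [LinearOrder I] [DistribLattice A] [BoundedOrder A]

/-- Prime filters ordered by inclusion. -/
instance : PartialOrder (PrimeFilter A) where
  le P Q := P.carrier ⊆ Q.carrier
  le_refl _ _ hx := hx
  le_trans _ _ _ h1 h2 _ hx := h2 (h1 hx)
  le_antisymm P Q h1 h2 := by
    cases P; cases Q
    simp only [PrimeFilter.mk.injEq]
    exact subset_antisymm h1 h2

/-- The map `σ_A`. -/
def sigmaA (a : A) : Set (PrimeFilter A) := {P | a ∈ P.carrier}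

/-- The Priestley topology on the set of prime filters, with sub-basis the sets
`σ_A a` and their complements. -/
instance : TopologicalSpace (PrimeFilter A) :=
  TopologicalSpace.generateFrom
    (Set.range (sigmaA (A := A)) ∪ Set.range (fun a : A => (sigmaA a)ᶜ))

/-- The map `f_i^A (P) = φ_i⁻¹(P)` on prime filters. -/
def LMAlg.fA (L : LMAlg I A) (i : I) (P : PrimeFilter A) : PrimeFilter A where
  carrier := L.phi i ⁻¹' P.carrier
  top_mem := by simp only [Set.mem_preimage, L.phi_top]; exact P.top_mem
  bot_notMem := by simp only [Set.mem_preimage, L.phi_bot]; exact P.bot_notMem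
  mem_of_le := by
    intro a b ha hab
    have h1 : L.phi i b = L.phi i a ⊔ L.phi i b := by
      rw [← L.phi_sup, sup_eq_right.mpr hab]
    exact P.mem_of_le ha (le_sup_left.trans_eq h1.symm)
  inf_mem := by
    intro a b ha hb
    simp only [Set.mem_preimage, L.phi_inf]
    exact P.inf_mem ha hb
  prime := by
    intro a b h
    simp only [Set.mem_preimage, L.phi_sup] at h
    exact P.prime h

/-- An LM_θ-congruence: a bounded-lattice congruence compatible with all `phi i`, `phibar i`. -/
structure IsLMCongr (L : LMAlg I A) (r : A → A → Prop) : Prop where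
  refl : ∀ x, r x x
  symm : ∀ {x y}, r x y → r y x
  trans : ∀ {x y z}, r x y → r y z → r x z
  sup_congr : ∀ {x y u v}, r x y → r u v → r (x ⊔ u) (y ⊔ v)
  inf_congr : ∀ {x y u v}, r x y → r u v → r (x ⊓ u) (y ⊓ v)
  phi_congr : ∀ (i : I) {x y}, r x y → r (L.phi i x) (L.phi i y)
  phibar_congr : ∀ (i : I) {x y}, r x y → r (L.phibar i x) (L.phibar i y)

/-- A θ-congruence: a lattice congruence `r` with `r x y ↔ ∀ i, r (φ_i x) (φ_i y)`. -/
structure IsThetaCongr (L : LMAlg I A) (r : A → A → Prop) : Prop where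
  refl : ∀ x, r x x
  symm : ∀ {x y}, r x y → r y x
  trans : ∀ {x y z}, r x y → r y z → r x z
  sup_congr : ∀ {x y u v}, r x y → r u v → r (x ⊔ u) (y ⊔ v)
  inf_congr : ∀ {x y u v}, r x y → r u v → r (x ⊓ u) (y ⊓ v)
  theta : ∀ x y, r x y ↔ ∀ i : I, r (L.phi i x) (L.phi i y)

/-- `Y` is semimodal if `f i '' Y ⊆ Y` for all `i`. -/
def Semimodal {I X : Type*} (f : I → X → X) (Y : Set X) : Prop := ∀ i, f i '' Y ⊆ Y

/-- `Y` is modal if `f i ⁻¹' Y = Y` for all `i`. -/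
def Modal {I X : Type*} (f : I → X → X) (Y : Set X) : Prop := ∀ i, f i ⁻¹' Y = Y

/-- `Y` is a θ-subset if `⋃ i, f i '' Y ⊆ Y ⊆ closure (⋃ i, f i '' Y)`. -/
def ThetaSubset {I X : Type*} [TopologicalSpace X] (f : I → X → X) (Y : Set X) : Prop :=
  (⋃ i, f i '' Y) ⊆ Y ∧ Y ⊆ closure (⋃ i, f i '' Y)

/-- The relation `Θ` determined by an (open) subset `G` of the dual space:
`(a,b) ∈ Θ(G)` iff `σ_A a △ σ_A b ⊆ G`. -/
def thetaO (G : Set (PrimeFilter A)) : A → A → Prop :=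
  fun a b => symmDiff (sigmaA a) (sigmaA b) ⊆ G

/-- `r` is the principal LM_θ-congruence generated by `(a,b)`. -/
def IsPrincipalLMCongrOn (L : LMAlg I A) (r : A → A → Prop) (a b : A) : Prop :=
  IsLMCongr L r ∧ r a b ∧ ∀ s, IsLMCongr L s → s a b → ∀ x y, r x y → s x y

/-- `r` is the principal θ-congruence generated by `(a,b)`. -/
def IsPrincipalThetaCongrOn (L : LMAlg I A) (r : A → A → Prop) (a b : A) : Prop :=
  IsThetaCongr L r ∧ r a b ∧ ∀ s, IsThetaCongr L s → s a b → ∀ x y, r x y → s x y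

/-- `r` is a principal LM_θ-congruence. -/
def IsPrincipalLMCongr (L : LMAlg I A) (r : A → A → Prop) : Prop :=
  ∃ a b, IsPrincipalLMCongrOn L r a b

/-- `r` is a principal θ-congruence. -/
def IsPrincipalThetaCongr (L : LMAlg I A) (r : A → A → Prop) : Prop :=
  ∃ a b, IsPrincipalThetaCongrOn L r a b

/-- `r` is a Boolean LM_θ-congruence: a complemented element of the lattice of
LM_θ-congruences ordered by inclusion (the bottom element is equality and the
join of `r` and its complement, i.e. the least congruence containing both, is
the total relation). -/
def IsBooleanLMCongr (L : LMAlg I A) (r : A → A → Prop) : Prop :=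
  IsLMCongr L r ∧ ∃ s, IsLMCongr L s ∧
    (∀ x y, (r x y ∧ s x y) ↔ x = y) ∧
    (∀ t, IsLMCongr L t → (∀ x y, r x y → t x y) → (∀ x y, s x y → t x y) → ∀ x y, t x y)

/-!
The maps `Y ↦ Θ_M(Y)` and `θ ↦ {P | P is θ-saturated}` form an antitone Galois connection
between sets of prime filters and relations on `A`. Its closed elements are, on one side, the
closed sets (a prime filter outside a closed set `Y` is separated from `Y` by a basic set
`σ(a) \ σ(b)`), and on the other side the lattice congruences (by the prime ideal theorem,
prime filters of the quotient lattice separate its points). Modality matches compatibility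
with the `φ_i`: for a prime filter `P`, whether `x ∈ P` is determined by which `φ_j x` lie
in `P`, because `x` and `y` agree below `⋀ⱼ (φⱼ x ⇔ φⱼ y)`, a finite meet. Part (ii) is part
(i) composed with complementation, since `Θ_OM(G) = Θ_M(Gᶜ)`.
-/

theorem inf_sup_inf_le_of_disjoint {α : Type*} [DistribLattice α] [OrderBot α] {p p' q q' : α}
    (h : Disjoint p p') : p ⊓ (p ⊓ q ⊔ p' ⊓ q') ≤ q := by
  rw [inf_sup_left, ← inf_assoc, ← inf_assoc, h.eq_bot, bot_inf_eq, sup_bot_eq]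
  exact inf_le_right

section LatticeCongr

variable {α : Type*}

structure IsLatticeCongr [Lattice α] (r : α → α → Prop) : Prop where
  equivalence : Equivalence r
  sup_congr : ∀ {x y u v}, r x y → r u v → r (x ⊔ u) (y ⊔ v)
  inf_congr : ∀ {x y u v}, r x y → r u v → r (x ⊓ u) (y ⊓ v)

namespace IsLatticeCongr

section Lattice

variable [Lattice α] {r : α → α → Prop} (hr : IsLatticeCongr r)

/-- A synonym of `Quot r`: Mathlib's `Quotient` carries an unrelated `Preorder` instance. -/
def Quotient (_ : IsLatticeCongr r) : Type _ := Quot r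

instance : Max hr.Quotient :=
  ⟨Quot.map₂ (· ⊔ ·) (fun a _ _ h => hr.sup_congr (hr.equivalence.refl a) h)
    fun _ _ b h => hr.sup_congr h (hr.equivalence.refl b)⟩

instance : Min hr.Quotient :=
  ⟨Quot.map₂ (· ⊓ ·) (fun a _ _ h => hr.inf_congr (hr.equivalence.refl a) h)
    fun _ _ b h => hr.inf_congr h (hr.equivalence.refl b)⟩

instance : Lattice hr.Quotient :=
  Lattice.mk'
    (by rintro ⟨a⟩ ⟨b⟩; exact congrArg (Quot.mk r) (sup_comm a b))
    (by rintro ⟨a⟩ ⟨b⟩ ⟨c⟩; exact congrArg (Quot.mk r) (sup_assoc a b c))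
    (by rintro ⟨a⟩ ⟨b⟩; exact congrArg (Quot.mk r) (inf_comm a b))
    (by rintro ⟨a⟩ ⟨b⟩ ⟨c⟩; exact congrArg (Quot.mk r) (inf_assoc a b c))
    (by rintro ⟨a⟩ ⟨b⟩; exact congrArg (Quot.mk r) sup_inf_self)
    (by rintro ⟨a⟩ ⟨b⟩; exact congrArg (Quot.mk r) inf_sup_self)

def quotientMk : LatticeHom α hr.Quotient where
  toFun := Quot.mk r
  map_sup' _ _ := rfl
  map_inf' _ _ := rfl

theorem quotientMk_eq_iff {a b : α} : hr.quotientMk a = hr.quotientMk b ↔ r a b :=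
  ⟨fun h => hr.equivalence.eqvGen_iff.mp (Quot.eqvGen_exact h), Quot.sound⟩

end Lattice

instance [DistribLattice α] {r : α → α → Prop} (hr : IsLatticeCongr r) :
    DistribLattice hr.Quotient :=
  DistribLattice.ofInfSupLe (by
    rintro ⟨a⟩ ⟨b⟩ ⟨c⟩; exact (congrArg hr.quotientMk (inf_sup_left a b c)).le)

end IsLatticeCongr

end LatticeCongr

namespace PrimeFilter

variable {P : PrimeFilter A} {a b : A}

theorem mem_inf_iff : a ⊓ b ∈ P.carrier ↔ a ∈ P.carrier ∧ b ∈ P.carrier :=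
  ⟨fun h => ⟨P.mem_of_le h inf_le_left, P.mem_of_le h inf_le_right⟩,
    fun h => P.inf_mem h.1 h.2⟩

theorem mem_sup_iff : a ⊔ b ∈ P.carrier ↔ a ∈ P.carrier ∨ b ∈ P.carrier :=
  ⟨P.prime, fun h => h.elim (P.mem_of_le · le_sup_left) (P.mem_of_le · le_sup_right)⟩

theorem mem_iff_notMem_of_isCompl {u v : A} (h : IsCompl u v) :
    v ∈ P.carrier ↔ u ∉ P.carrier :=
  ⟨fun hv hu => P.bot_notMem (h.inf_eq_bot ▸ P.inf_mem hu hv),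
    fun hu => (P.prime (h.sup_eq_top ▸ P.top_mem)).resolve_left hu⟩

def comapCompl {B : Type*} [Lattice B] (g : LatticeHom A B) (J : Order.Ideal B)
    (hJ : J.IsPrime) (htop : g ⊤ ∉ J) (hbot : g ⊥ ∈ J) : PrimeFilter A where
  carrier := {x | g x ∉ J}
  top_mem := htop
  bot_notMem h := h hbot
  mem_of_le ha hab hb := ha (J.lower (OrderHomClass.mono g hab) hb)
  inf_mem ha hb h := (hJ.mem_or_mem (by rwa [← map_inf])).elim ha hb
  prime h := by
    by_contra! hab
    exact h (by rw [map_sup]; exact J.sup_mem (not_not.mp hab.1) (not_not.mp hab.2))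

end PrimeFilter

theorem sigmaA_top : sigmaA (⊤ : A) = Set.univ :=
  Set.eq_univ_of_forall PrimeFilter.top_mem

theorem sigmaA_bot : sigmaA (⊥ : A) = ∅ :=
  Set.eq_empty_of_forall_notMem PrimeFilter.bot_notMem

theorem sigmaA_inf (a b : A) : sigmaA (a ⊓ b) = sigmaA a ∩ sigmaA b :=
  Set.ext fun _ => PrimeFilter.mem_inf_iff

theorem sigmaA_sup (a b : A) : sigmaA (a ⊔ b) = sigmaA a ∪ sigmaA b :=
  Set.ext fun _ => PrimeFilter.mem_sup_iff

theorem isOpen_sigmaA (a : A) : IsOpen (sigmaA a) :=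
  TopologicalSpace.GenerateOpen.basic _ (Or.inl ⟨a, rfl⟩)

theorem isClosed_sigmaA (a : A) : IsClosed (sigmaA a) :=
  ⟨TopologicalSpace.GenerateOpen.basic _ (Or.inr ⟨a, rfl⟩)⟩

theorem exists_sigmaA_diff_subset_of_isOpen {U : Set (PrimeFilter A)} (hU : IsOpen U)
    {P : PrimeFilter A} (hP : P ∈ U) :
    ∃ a b : A, a ∈ P.carrier ∧ b ∉ P.carrier ∧ sigmaA a \ sigmaA b ⊆ U := by
  induction hU generalizing P with
  | basic s hs =>
    rcases hs with ⟨a, rfl⟩ | ⟨b, rfl⟩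
    · exact ⟨a, ⊥, hP, P.bot_notMem, by simp [sigmaA_bot]⟩
    · exact ⟨⊤, b, P.top_mem, hP, by simp [sigmaA_top]⟩
  | univ => exact ⟨⊤, ⊥, P.top_mem, P.bot_notMem, Set.subset_univ _⟩
  | inter s t _ _ ihs iht =>
    obtain ⟨a₁, b₁, ha₁, hb₁, hs⟩ := ihs hP.1
    obtain ⟨a₂, b₂, ha₂, hb₂, ht⟩ := iht hP.2
    refine ⟨a₁ ⊓ a₂, b₁ ⊔ b₂, P.inf_mem ha₁ ha₂, fun h => (P.prime h).elim hb₁ hb₂, ?_⟩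
    rw [sigmaA_inf, sigmaA_sup]
    rintro Q ⟨⟨hQa₁, hQa₂⟩, hQb⟩
    exact ⟨hs ⟨hQa₁, fun h => hQb (Or.inl h)⟩, ht ⟨hQa₂, fun h => hQb (Or.inr h)⟩⟩
  | sUnion S _ ih =>
    obtain ⟨s, hs, hPs⟩ := hP
    obtain ⟨a, b, ha, hb, hsub⟩ := ih s hs hPs
    exact ⟨a, b, ha, hb, hsub.trans (Set.subset_sUnion_of_mem hs)⟩

def saturatedPrimeFilters (r : A → A → Prop) : Set (PrimeFilter A) :=
  {P | ∀ a b, r a b → (a ∈ P.carrier ↔ b ∈ P.carrier)}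

theorem exists_mem_saturatedPrimeFilters_of_not_le {r : A → A → Prop} (hr : IsLatticeCongr r)
    {a b : A} (hab : ¬ hr.quotientMk a ≤ hr.quotientMk b) :
    ∃ P ∈ saturatedPrimeFilters r, a ∈ P.carrier ∧ b ∉ P.carrier := by
  have hdisj : Disjoint (Order.PFilter.principal (hr.quotientMk a) : Set hr.Quotient)
      (Order.Ideal.principal (hr.quotientMk b)) :=
    Set.disjoint_left.mpr fun _ hax hxb => hab (le_trans hax hxb)
  obtain ⟨J, hJ, hbJ, haJ⟩ := DistribLattice.prime_ideal_of_disjoint_filter_ideal hdisj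
  have ha : hr.quotientMk a ∉ J :=
    Set.disjoint_left.mp haJ (Order.PFilter.mem_principal.mpr le_rfl)
  have hb : hr.quotientMk b ∈ J := hbJ (Order.Ideal.mem_principal.mpr le_rfl)
  refine ⟨PrimeFilter.comapCompl hr.quotientMk J hJ
    (fun h => ha (J.lower (OrderHomClass.mono _ le_top) h))
    (J.lower (OrderHomClass.mono _ bot_le) hb), ?_, ha, not_not.mpr hb⟩
  intro x y hxy
  show _ ∉ J ↔ _ ∉ J
  rw [hr.quotientMk_eq_iff.mpr hxy]

theorem exists_mem_saturatedPrimeFilters_of_not {r : A → A → Prop} (hr : IsLatticeCongr r)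
    {a b : A} (h : ¬ r a b) :
    ∃ P ∈ saturatedPrimeFilters r, ¬ (a ∈ P.carrier ↔ b ∈ P.carrier) := by
  by_cases hab : hr.quotientMk a ≤ hr.quotientMk b
  · have hba : ¬ hr.quotientMk b ≤ hr.quotientMk a :=
      fun hba => h (hr.quotientMk_eq_iff.mp (le_antisymm hab hba))
    obtain ⟨P, hP, hb, ha⟩ := exists_mem_saturatedPrimeFilters_of_not_le hr hba
    exact ⟨P, hP, fun h => ha (h.mpr hb)⟩
  · obtain ⟨P, hP, ha, hb⟩ := exists_mem_saturatedPrimeFilters_of_not_le hr hab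
    exact ⟨P, hP, fun h => hb (h.mp ha)⟩

def thetaM (Y : Set (PrimeFilter A)) : A → A → Prop :=
  fun a b => sigmaA a ∩ Y = sigmaA b ∩ Y

theorem thetaM_iff {Y : Set (PrimeFilter A)} {a b : A} :
    thetaM Y a b ↔ ∀ P ∈ Y, (a ∈ P.carrier ↔ b ∈ P.carrier) := by
  simp only [thetaM, Set.ext_iff, Set.mem_inter_iff, sigmaA, Set.mem_ofPred_eq]
  exact forall_congr' fun P => by by_cases hP : P ∈ Y <;> simp [hP]

theorem le_thetaM_iff {r : A → A → Prop} {Y : Set (PrimeFilter A)} :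
    r ≤ thetaM Y ↔ Y ⊆ saturatedPrimeFilters r := by
  simp only [Pi.le_def, le_Prop_eq, thetaM_iff]
  exact ⟨fun h P hP a b hab => h a b hab P hP, fun h a b hab P hP => h hP a b hab⟩

theorem gc_thetaM_saturatedPrimeFilters :
    GaloisConnection (fun Y : Set (PrimeFilter A) => OrderDual.toDual (thetaM Y))
      (fun r => saturatedPrimeFilters (OrderDual.ofDual r)) :=
  fun _ _ => le_thetaM_iff

theorem isLatticeCongr_thetaM (Y : Set (PrimeFilter A)) : IsLatticeCongr (thetaM Y) where
  equivalence := ⟨fun _ => rfl, Eq.symm, Eq.trans⟩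
  sup_congr h h' := thetaM_iff.mpr fun P hP => by
    rw [PrimeFilter.mem_sup_iff, PrimeFilter.mem_sup_iff, thetaM_iff.mp h P hP,
      thetaM_iff.mp h' P hP]
  inf_congr h h' := thetaM_iff.mpr fun P hP => by
    rw [PrimeFilter.mem_inf_iff, PrimeFilter.mem_inf_iff, thetaM_iff.mp h P hP,
      thetaM_iff.mp h' P hP]

theorem isClosed_saturatedPrimeFilters (r : A → A → Prop) :
    IsClosed (saturatedPrimeFilters r) := by
  have : saturatedPrimeFilters r = ⋂ (a) (b) (_ : r a b),
      (sigmaA a ∩ sigmaA b) ∪ ((sigmaA a)ᶜ ∩ (sigmaA b)ᶜ) := by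
    ext P
    simp [saturatedPrimeFilters, sigmaA, iff_iff_and_or_not_and_not]
  rw [this]
  exact isClosed_iInter fun a => isClosed_iInter fun b => isClosed_iInter fun _ =>
    ((isClosed_sigmaA a).inter (isClosed_sigmaA b)).union
      ((isOpen_sigmaA a).isClosed_compl.inter (isOpen_sigmaA b).isClosed_compl)

theorem thetaM_saturatedPrimeFilters {r : A → A → Prop} (hr : IsLatticeCongr r) :
    thetaM (saturatedPrimeFilters r) = r := by
  refine le_antisymm (fun a b hab => ?_) (le_thetaM_iff.mpr subset_rfl)
  by_contra h
  obtain ⟨P, hP, hne⟩ := exists_mem_saturatedPrimeFilters_of_not hr h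
  exact hne (thetaM_iff.mp hab P hP)

theorem saturatedPrimeFilters_thetaM {Y : Set (PrimeFilter A)} (hY : IsClosed Y) :
    saturatedPrimeFilters (thetaM Y) = Y := by
  refine subset_antisymm (fun P hP => ?_) (le_thetaM_iff.mp le_rfl)
  by_contra hPY
  obtain ⟨a, b, ha, hb, hsub⟩ := exists_sigmaA_diff_subset_of_isOpen hY.isOpen_compl hPY
  have hθ : thetaM Y a (a ⊓ b) := thetaM_iff.mpr fun Q hQ => by
    rw [PrimeFilter.mem_inf_iff]
    exact ⟨fun h => ⟨h, by_contra fun hb => hsub ⟨h, hb⟩ hQ⟩, And.left⟩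
  exact hb (PrimeFilter.mem_inf_iff.mp ((hP a _ hθ).mp ha)).2

theorem IsLMCongr.isLatticeCongr {L : LMAlg I A} {r : A → A → Prop} (hr : IsLMCongr L r) :
    IsLatticeCongr r :=
  ⟨⟨hr.refl, hr.symm, hr.trans⟩, hr.sup_congr, hr.inf_congr⟩

namespace LMAlg

variable (L : LMAlg I A)

def phiHom (i : I) : BoundedLatticeHom A A where
  toFun := L.phi i
  map_sup' := L.phi_sup i
  map_inf' := L.phi_inf i
  map_top' := L.phi_top i
  map_bot' := L.phi_bot i

theorem isCompl_phi_phibar (i : I) (x : A) : IsCompl (L.phi i x) (L.phibar i x) :=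
  .of_eq (L.inf_phibar i x) (L.sup_phibar i x)

theorem phi_phibar (j i : I) (x : A) : L.phi j (L.phibar i x) = L.phibar i x := by
  have h := (L.isCompl_phi_phibar i x).map (L.phiHom j)
  rw [phiHom, BoundedLatticeHom.coe_mk, LatticeHom.coe_mk, SupHom.coe_mk, L.phi_phi] at h
  exact ((L.isCompl_phi_phibar i x).right_unique h).symm

theorem isLMCongr_thetaM {Y : Set (PrimeFilter A)} (hY : Modal L.fA Y) :
    IsLMCongr L (thetaM Y) := by
  have hphi : ∀ i {x y}, thetaM Y x y → thetaM Y (L.phi i x) (L.phi i y) := fun i _ _ h =>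
    thetaM_iff.mpr fun P hP => thetaM_iff.mp h (L.fA i P) (Set.ext_iff.mp (hY i) P |>.mpr hP)
  have hθ := isLatticeCongr_thetaM Y
  refine ⟨hθ.equivalence.refl, hθ.equivalence.symm, hθ.equivalence.trans, hθ.sup_congr,
    hθ.inf_congr, hphi, fun i x y h => thetaM_iff.mpr fun P hP => ?_⟩
  rw [PrimeFilter.mem_iff_notMem_of_isCompl (L.isCompl_phi_phibar i x),
    PrimeFilter.mem_iff_notMem_of_isCompl (L.isCompl_phi_phibar i y),
    thetaM_iff.mp (hphi i h) P hP]

variable [Fintype I]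

/-- `⋀ⱼ (φⱼ x ⇔ φⱼ y)`, the Boolean biimplication being computed with the complements `φ̄ⱼ`. -/
def phiBiimp (x y : A) : A :=
  Finset.univ.inf fun j => L.phi j x ⊓ L.phi j y ⊔ L.phibar j x ⊓ L.phibar j y

theorem phi_phiBiimp (i : I) (x y : A) : L.phi i (L.phiBiimp x y) = L.phiBiimp x y := by
  change L.phiHom i _ = _
  rw [phiBiimp, map_finset_inf]
  congr 1
  funext j
  simp only [Function.comp, phiHom, BoundedLatticeHom.coe_mk, LatticeHom.coe_mk, SupHom.coe_mk,
    L.phi_sup, L.phi_inf, L.phi_phi, L.phi_phibar]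

theorem phi_inf_phiBiimp_le (j : I) (x y : A) : L.phi j x ⊓ L.phiBiimp x y ≤ L.phi j y :=
  (inf_le_inf_left _ (Finset.inf_le (Finset.mem_univ j))).trans
    (inf_sup_inf_le_of_disjoint (L.isCompl_phi_phibar j x).disjoint)

theorem phiBiimp_comm (x y : A) : L.phiBiimp x y = L.phiBiimp y x := by
  simp only [phiBiimp, inf_comm]

theorem inf_phiBiimp (x y : A) : x ⊓ L.phiBiimp x y = y ⊓ L.phiBiimp x y := by
  refine L.determined _ _ fun j => ?_
  rw [L.phi_inf, L.phi_inf, L.phi_phiBiimp]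
  refine le_antisymm (le_inf (L.phi_inf_phiBiimp_le j x y) inf_le_right)
    (le_inf ?_ inf_le_right)
  rw [L.phiBiimp_comm]
  exact L.phi_inf_phiBiimp_le j y x

theorem mem_iff_of_forall_phi_mem_iff {P : PrimeFilter A} {x y : A}
    (h : ∀ j, L.phi j x ∈ P.carrier ↔ L.phi j y ∈ P.carrier) :
    x ∈ P.carrier ↔ y ∈ P.carrier := by
  have hc : L.phiBiimp x y ∈ P.carrier := by
    refine Finset.inf_mem P.carrier P.top_mem (fun _ ha _ hb => P.inf_mem ha hb) _ _
      fun j _ => ?_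
    rw [PrimeFilter.mem_sup_iff, PrimeFilter.mem_inf_iff, PrimeFilter.mem_inf_iff,
      PrimeFilter.mem_iff_notMem_of_isCompl (L.isCompl_phi_phibar j x),
      PrimeFilter.mem_iff_notMem_of_isCompl (L.isCompl_phi_phibar j y)]
    exact iff_iff_and_or_not_and_not.mp (h j)
  calc x ∈ P.carrier ↔ x ⊓ L.phiBiimp x y ∈ P.carrier := by
        simp [PrimeFilter.mem_inf_iff, hc]
    _ ↔ y ⊓ L.phiBiimp x y ∈ P.carrier := by rw [L.inf_phiBiimp]
    _ ↔ y ∈ P.carrier := by simp [PrimeFilter.mem_inf_iff, hc]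

theorem modal_saturatedPrimeFilters {r : A → A → Prop} (hr : IsLMCongr L r) :
    Modal L.fA (saturatedPrimeFilters r) := by
  refine fun i => Set.ext fun P =>
    ⟨fun h a b hab => ?_, fun h a b hab => h _ _ (hr.phi_congr i hab)⟩
  refine L.mem_iff_of_forall_phi_mem_iff fun j => ?_
  simpa only [LMAlg.fA, Set.mem_preimage, L.phi_phi] using h _ _ (hr.phi_congr j hab)

def closedModalOrderIso :
    {Y : Set (PrimeFilter A) // IsClosed Y ∧ Modal L.fA Y} ≃o
      ({r : A → A → Prop // IsLMCongr L r})ᵒᵈ :=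
  Equiv.toOrderIso
    { toFun Y := OrderDual.toDual ⟨thetaM Y.1, L.isLMCongr_thetaM Y.2.2⟩
      invFun r := ⟨saturatedPrimeFilters (OrderDual.ofDual r).1,
        isClosed_saturatedPrimeFilters _, L.modal_saturatedPrimeFilters (OrderDual.ofDual r).2⟩
      left_inv Y := Subtype.ext (saturatedPrimeFilters_thetaM Y.2.1)
      right_inv r :=
        Subtype.ext (thetaM_saturatedPrimeFilters (OrderDual.ofDual r).2.isLatticeCongr) }
    (fun _ _ h => gc_thetaM_saturatedPrimeFilters.monotone_l h)
    (fun _ _ h => gc_thetaM_saturatedPrimeFilters.monotone_u h)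

end LMAlg

theorem thetaM_compl (G : Set (PrimeFilter A)) : thetaM Gᶜ = thetaO G := by
  funext a b
  rw [thetaM_iff]
  simp only [thetaO, Set.subset_def, Set.mem_symmDiff, Set.mem_compl_iff, sigmaA,
    Set.mem_ofPred_eq, eq_iff_iff]
  exact forall_congr' fun P => by tauto

theorem Modal.compl {J X : Type*} {f : J → X → X} {Y : Set X} (h : Modal f Y) : Modal f Yᶜ :=
  fun i => by rw [Set.preimage_compl, h i]

def openModalComplOrderIso {J X : Type*} [TopologicalSpace X] (f : J → X → X) :
    {G : Set X // IsOpen G ∧ Modal f G} ≃o ({Y : Set X // IsClosed Y ∧ Modal f Y})ᵒᵈ where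
  toFun G := OrderDual.toDual ⟨G.1ᶜ, G.2.1.isClosed_compl, G.2.2.compl⟩
  invFun Y := ⟨(OrderDual.ofDual Y).1ᶜ, (OrderDual.ofDual Y).2.1.isOpen_compl,
    (OrderDual.ofDual Y).2.2.compl⟩
  left_inv _ := Subtype.ext (compl_compl _)
  right_inv _ := Subtype.ext (compl_compl _)
  map_rel_iff' := Set.compl_subset_compl

def LMAlg.openModalOrderIso [Fintype I] (L : LMAlg I A) :
    {G : Set (PrimeFilter A) // IsOpen G ∧ Modal L.fA G} ≃o {r : A → A → Prop // IsLMCongr L r} :=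
  (openModalComplOrderIso L.fA).trans (L.closedModalOrderIso.dual.trans (OrderIso.dualDual _).symm)

theorem stmt8_general {A : Type*} [DistribLattice A] [BoundedOrder A] (n : ℕ)
    (L : LMAlg (Fin (n - 1)) A) :
    (∃ e : {Y : Set (PrimeFilter A) // IsClosed Y ∧ Modal L.fA Y} ≃o
           ({r : A → A → Prop // IsLMCongr L r})ᵒᵈ,
       ∀ Y, (OrderDual.ofDual (e Y)).val =
         fun a b => sigmaA a ∩ Y.val = sigmaA b ∩ Y.val) ∧
    (∃ e : {G : Set (PrimeFilter A) // IsOpen G ∧ Modal L.fA G} ≃o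
           {r : A → A → Prop // IsLMCongr L r},
       ∀ G, (e G).val = fun a b => symmDiff (sigmaA a) (sigmaA b) ⊆ G.val) :=
  ⟨⟨L.closedModalOrderIso, fun _ => rfl⟩, ⟨L.openModalOrderIso, fun G => thetaM_compl G.1⟩⟩

/-- for an LM_n-algebra `A`: (i) closed modal subsets of `X(A)` are
dually isomorphic (via `Θ_M`) to the lattice of LM_n-congruences; (ii) open modal
subsets of `X(A)` are isomorphic (via `Θ_OM`) to the lattice of LM_n-congruences. -/
theorem stmt8 {A : Type*} [DistribLattice A] [BoundedOrder A] (n : ℕ) (hn : 2 ≤ n)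
    (L : LMAlg (Fin (n - 1)) A) :
    (∃ e : {Y : Set (PrimeFilter A) // IsClosed Y ∧ Modal L.fA Y} ≃o
           ({r : A → A → Prop // IsLMCongr L r})ᵒᵈ,
       ∀ Y, (OrderDual.ofDual (e Y)).val =
         fun a b => sigmaA a ∩ Y.val = sigmaA b ∩ Y.val) ∧
    (∃ e : {G : Set (PrimeFilter A) // IsOpen G ∧ Modal L.fA G} ≃o
           {r : A → A → Prop // IsLMCongr L r},
       ∀ G, (e G).val = fun a b => symmDiff (sigmaA a) (sigmaA b) ⊆ G.val) :=
  stmt8_general n L
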